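/- For every integer q ≥ 3 one has 0 < β_s(q) < β_c(q) < q, where β_c(q) = (q−1)log(q−1)/(q−2). Moreover, for q = 2 (with β_c(2) = 1 and β_s(2) defined by the same supremum formula with q = 2) one has β_s(2) = β_c(2) = 1. -/

import Mathlib

/-!
For `x ∈ (1/q, 1)`, `D_β(x)` has the sign of `β - g(x)` with
`g(x) = (q-1) log((q-1)x/(1-x)) / (2(qx-1))` (`fixedPointBeta`). Since `D_β(1) < 0`, the
intermediate value theorem turns "`D_β ≥ 0` somewhere in `(1/q, 1)`" into "`D_β` vanishes there",
so `β_s(q)` is the infimum of `g` over `(1/q, 1)`. From `log y ≥ 1 - 1/y` one gets `g > 1/2`.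
For `q = 2`, `g((1+m)/2) = artanh(m)/m`, whose infimum over `0 < m < 1` is its limit `1` at `0`.
For `q ≥ 3`, `g((q-1)/q) = β_c(q)`, and the midpoint `(3q-2)/(4q)` of `1/2` and `(q-1)/q`
already gives a smaller value, because `(q-1)³(q+2)² - (q-1)²(3q-2)² = (q-1)²(q-2)³ > 0`.
-/

/-- The drift function `D_β(x) = −x + (1 + (q−1) e^{2β(1−qx)/(q−1)})⁻¹`,
equivalently `−x + e^{2βx}/(e^{2βx} + (q−1)e^{2β(1−x)/(q−1)})`. -/
noncomputable def Dfun (q : ℕ) (β x : ℝ) : ℝ :=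
  -x + (1 + ((q : ℝ) - 1) * Real.exp (2 * β * (1 - (q : ℝ) * x) / ((q : ℝ) - 1)))⁻¹

/-- The dynamical (spinodal) critical inverse temperature
`β_s(q) = sup {β ≥ 0 : D_β(x) ≠ 0 for all x ∈ (1/q,1)}`. -/
noncomputable def betaS (q : ℕ) : ℝ :=
  sSup {β : ℝ | 0 ≤ β ∧ ∀ x ∈ Set.Ioo (1 / (q : ℝ)) 1, Dfun q β x ≠ 0}

/-- The static critical inverse temperature `β_c(q) = (q−1)log(q−1)/(q−2)`
for `q ≥ 3`, with `β_c(2) = 1`. -/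
noncomputable def betaC (q : ℕ) : ℝ :=
  if q = 2 then 1 else ((q : ℝ) - 1) * Real.log ((q : ℝ) - 1) / ((q : ℝ) - 2)

open Real Set

lemma sSup_setOf_forall_lt_eq_iInf {ι : Type*} [Nonempty ι] {g : ι → ℝ}
    (hg : BddBelow (range g)) (h0 : 0 ≤ ⨅ i, g i) :
    sSup {β : ℝ | 0 ≤ β ∧ ∀ i, β < g i} = ⨅ i, g i := by
  set T := {β : ℝ | 0 ≤ β ∧ ∀ i, β < g i}
  have hle : ∀ β ∈ T, β ≤ ⨅ i, g i := fun β hβ => le_ciInf fun i => (hβ.2 i).le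
  refine le_antisymm (Real.sSup_le hle h0) (le_of_forall_lt fun w hw => ?_)
  rcases lt_or_ge w 0 with hw0 | hw0
  · exact hw0.trans_le (Real.sSup_nonneg fun β hβ => hβ.1)
  · have hmem : (w + ⨅ i, g i) / 2 ∈ T := ⟨by linarith, fun i => by linarith [ciInf_le hg i]⟩
    exact (by linarith : w < (w + ⨅ i, g i) / 2).trans_le (le_csSup ⟨_, hle⟩ hmem)

lemma two_mul_le_log_one_add_sub_log_one_sub {m : ℝ} (h0 : 0 ≤ m) (h1 : m < 1) :
    2 * m ≤ log (1 + m) - log (1 - m) := by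
  have := le_hasSum (hasSum_log_sub_log_of_abs_lt_one (by rwa [abs_of_nonneg h0])) 0
    fun k _ => by positivity
  simpa using this

lemma log_one_add_sub_log_one_sub_le {m : ℝ} (h0 : 0 ≤ m) (h1 : m < 1) :
    log (1 + m) - log (1 - m) ≤ m + m / (1 - m) := by
  have h1m : 0 < 1 - m := by linarith
  have hplus : log (1 + m) ≤ m := by linarith [log_le_sub_one_of_pos (by linarith : 0 < 1 + m)]
  have hminus : -log (1 - m) ≤ m / (1 - m) := by
    have := log_le_sub_one_of_pos (inv_pos.mpr h1m)
    rw [log_inv] at this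
    have h : (1 - m)⁻¹ - 1 = m / (1 - m) := by field_simp; ring
    linarith
  linarith

noncomputable def fixedPointBeta (q : ℕ) (x : ℝ) : ℝ :=
  ((q : ℝ) - 1) * log (((q : ℝ) - 1) * x / (1 - x)) / (2 * ((q : ℝ) * x - 1))

section Drift

variable {q : ℕ} {β x : ℝ}

lemma Dfun_neg_iff_lt_fixedPointBeta (hq : 2 ≤ q) (hx : x ∈ Ioo (1 / (q : ℝ)) 1) :
    Dfun q β x < 0 ↔ β < fixedPointBeta q x := by
  have hq' : (2 : ℝ) ≤ q := by exact_mod_cast hq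
  have hqx : 1 < q * x := by rw [← div_lt_iff₀' (by positivity)]; exact hx.1
  have hx0 : 0 < x := by nlinarith [hx.2]
  set t := 2 * β * (1 - (q : ℝ) * x) / ((q : ℝ) - 1)
  have hr : 0 < ((q : ℝ) - 1) * x / (1 - x) := div_pos (by nlinarith) (by linarith [hx.2])
  calc Dfun q β x < 0 ↔ (1 + ((q : ℝ) - 1) * exp t)⁻¹ < x := by
        unfold Dfun; constructor <;> intro h <;> linarith
    _ ↔ x⁻¹ < 1 + ((q : ℝ) - 1) * exp t :=
        inv_lt_comm₀ (by have := exp_pos t; nlinarith) hx0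
    _ ↔ exp (-t) < ((q : ℝ) - 1) * x / (1 - x) := by
        rw [exp_neg, inv_lt_iff_one_lt_mul₀ hx0, inv_lt_iff_one_lt_mul₀ (exp_pos t),
          div_mul_eq_mul_div, one_lt_div (by linarith [hx.2])]
        constructor <;> intro h <;> nlinarith [exp_pos t]
    _ ↔ -t < log (((q : ℝ) - 1) * x / (1 - x)) := (lt_log_iff_exp_lt hr).symm
    _ ↔ β < fixedPointBeta q x := by
        have ht : -t = β * (2 * (q * x - 1)) / ((q : ℝ) - 1) := by ring
        rw [ht, div_lt_iff₀ (by linarith), fixedPointBeta, lt_div_iff₀ (by linarith), mul_comm β,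
          mul_comm (log _)]

lemma Dfun_one_neg (hq : 2 ≤ q) : Dfun q β 1 < 0 := by
  have hq' : (2 : ℝ) ≤ q := by exact_mod_cast hq
  have h : 1 < 1 + ((q : ℝ) - 1) * exp (2 * β * (1 - (q : ℝ) * 1) / ((q : ℝ) - 1)) := by
    have := exp_pos (2 * β * (1 - (q : ℝ) * 1) / ((q : ℝ) - 1)); nlinarith
  unfold Dfun
  linarith [inv_lt_one_of_one_lt₀ h]

lemma continuous_Dfun (hq : 1 ≤ q) : Continuous (Dfun q β) := by
  have hq' : (1 : ℝ) ≤ q := by exact_mod_cast hq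
  refine continuous_neg.add (Continuous.inv₀ (by fun_prop) fun x => ?_)
  have := exp_pos (2 * β * (1 - (q : ℝ) * x) / ((q : ℝ) - 1))
  nlinarith

lemma exists_Dfun_eq_zero_of_nonneg (hq : 2 ≤ q) (hx : x ∈ Ioo (1 / (q : ℝ)) 1)
    (h : 0 ≤ Dfun q β x) : ∃ z ∈ Ioo (1 / (q : ℝ)) 1, Dfun q β z = 0 := by
  obtain ⟨z, hz, hz0⟩ := intermediate_value_Ico' hx.2.le
    (continuous_Dfun (by omega)).continuousOn ⟨Dfun_one_neg hq, h⟩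
  exact ⟨z, ⟨hx.1.trans_le hz.1, hz.2⟩, hz0⟩

lemma forall_Dfun_ne_zero_iff (hq : 2 ≤ q) :
    (∀ x ∈ Ioo (1 / (q : ℝ)) 1, Dfun q β x ≠ 0) ↔
      ∀ x ∈ Ioo (1 / (q : ℝ)) 1, β < fixedPointBeta q x := by
  refine ⟨fun h x hx => (Dfun_neg_iff_lt_fixedPointBeta hq hx).1 ?_,
    fun h x hx => ((Dfun_neg_iff_lt_fixedPointBeta hq hx).2 (h x hx)).ne⟩
  by_contra hnonneg
  obtain ⟨z, hz, hz0⟩ := exists_Dfun_eq_zero_of_nonneg hq hx (not_lt.1 hnonneg)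
  exact h z hz hz0

end Drift

lemma half_lt_fixedPointBeta {q : ℕ} {x : ℝ} (hq : 2 ≤ q) (hx : x ∈ Ioo (1 / (q : ℝ)) 1) :
    1 / 2 < fixedPointBeta q x := by
  have hq' : (2 : ℝ) ≤ q := by exact_mod_cast hq
  have hqx : 1 < q * x := by rw [← div_lt_iff₀' (by positivity)]; exact hx.1
  have hx0 : 0 < x := by nlinarith [hx.2]
  set r := ((q : ℝ) - 1) * x / (1 - x)
  have hlog : 1 - r⁻¹ ≤ log r :=
    one_sub_inv_le_log_of_pos (div_pos (by nlinarith) (by linarith [hx.2]))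
  have hr : ((q : ℝ) - 1) * (1 - r⁻¹) = (q * x - 1) / x := by
    have : (q : ℝ) - 1 ≠ 0 := by linarith
    have : 1 - x ≠ 0 := by linarith [hx.2]
    simp only [r]; field_simp; ring
  have hlt : q * x - 1 < (q * x - 1) / x := by rw [lt_div_iff₀ hx0]; nlinarith [hx.2]
  rw [fixedPointBeta, lt_div_iff₀ (by linarith)]
  nlinarith [mul_le_mul_of_nonneg_left hlog (by linarith : (0 : ℝ) ≤ q - 1)]

lemma bddBelow_range_fixedPointBeta {q : ℕ} (hq : 2 ≤ q) :
    BddBelow (range fun x : Ioo (1 / (q : ℝ)) 1 => fixedPointBeta q x) :=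
  ⟨1 / 2, forall_mem_range.2 fun x => (half_lt_fixedPointBeta hq x.2).le⟩

lemma nonempty_Ioo_one_div_natCast {q : ℕ} (hq : 2 ≤ q) : (Ioo (1 / (q : ℝ)) 1).Nonempty :=
  nonempty_Ioo.2 ((div_lt_one (by positivity)).2 (by exact_mod_cast hq))

theorem betaS_eq_iInf_fixedPointBeta {q : ℕ} (hq : 2 ≤ q) :
    betaS q = ⨅ x : Ioo (1 / (q : ℝ)) 1, fixedPointBeta q x := by
  have := (nonempty_Ioo_one_div_natCast hq).to_subtype
  have h0 : (0 : ℝ) ≤ ⨅ x : Ioo (1 / (q : ℝ)) 1, fixedPointBeta q x :=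
    le_ciInf fun x => by linarith [half_lt_fixedPointBeta hq x.2]
  rw [betaS, ← sSup_setOf_forall_lt_eq_iInf (bddBelow_range_fixedPointBeta hq) h0]
  simp_rw [forall_Dfun_ne_zero_iff hq, Subtype.forall]

lemma fixedPointBeta_two {m : ℝ} (h0 : 0 < m) (h1 : m < 1) :
    fixedPointBeta 2 ((1 + m) / 2) = (log (1 + m) - log (1 - m)) / (2 * m) := by
  have hx : (2 - 1) * ((1 + m) / 2) / (1 - (1 + m) / 2) = (1 + m) / (1 - m) := by
    field_simp; ring
  rw [fixedPointBeta, ← log_div (by linarith) (by linarith)]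
  push_cast
  rw [hx]
  ring

theorem betaS_two : betaS 2 = 1 := by
  have hmem : ∀ {m : ℝ}, 0 < m → m < 1 → (1 + m) / 2 ∈ Ioo (1 / ((2 : ℕ) : ℝ)) 1 :=
    fun h0 h1 => by push_cast; constructor <;> linarith
  have : Nonempty (Ioo (1 / ((2 : ℕ) : ℝ)) 1) := ⟨⟨_, hmem one_half_pos one_half_lt_one⟩⟩
  rw [betaS_eq_iInf_fixedPointBeta le_rfl]
  refine le_antisymm (le_of_forall_gt_imp_ge_of_dense fun β hβ => ?_) (le_ciInf fun ⟨x, hx⟩ => ?_)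
  · set m := (2 * β - 2) / (2 * β - 1)
    have h0 : 0 < m := div_pos (by linarith) (by linarith)
    have h1 : m < 1 := (div_lt_one (by linarith)).2 (by linarith)
    refine (ciInf_le (bddBelow_range_fixedPointBeta le_rfl) ⟨_, hmem h0 h1⟩).trans ?_
    rw [fixedPointBeta_two h0 h1, div_le_iff₀ (by positivity)]
    calc _ ≤ m + m / (1 - m) := log_one_add_sub_log_one_sub_le h0.le h1
      _ = β * (2 * m) := by
        have hβ' : 2 * β - 1 ≠ 0 := by linarith
        have : 1 - m = 1 / (2 * β - 1) := by simp only [m]; field_simp; ring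
        rw [this]; field_simp; ring
  · obtain ⟨m, rfl⟩ : ∃ m, x = (1 + m) / 2 := ⟨2 * x - 1, by ring⟩
    have h0 : 0 < m := by have := hx.1; push_cast at this; linarith
    have h1 : m < 1 := by linarith [hx.2]
    rw [fixedPointBeta_two h0 h1, le_div_iff₀ (by positivity), one_mul]
    exact two_mul_le_log_one_add_sub_log_one_sub h0.le h1

lemma half_le_betaS {q : ℕ} (hq : 2 ≤ q) : 1 / 2 ≤ betaS q := by
  have := (nonempty_Ioo_one_div_natCast hq).to_subtype
  rw [betaS_eq_iInf_fixedPointBeta hq]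
  exact le_ciInf fun x => (half_lt_fixedPointBeta hq x.2).le

lemma betaS_le_fixedPointBeta {q : ℕ} {x : ℝ} (hq : 2 ≤ q) (hx : x ∈ Ioo (1 / (q : ℝ)) 1) :
    betaS q ≤ fixedPointBeta q x := by
  rw [betaS_eq_iInf_fixedPointBeta hq]
  exact ciInf_le (bddBelow_range_fixedPointBeta hq) ⟨x, hx⟩

lemma betaC_lt_self {q : ℕ} (hq : 3 ≤ q) : betaC q < q := by
  have hq' : (3 : ℝ) ≤ q := by exact_mod_cast hq
  have hlog : log ((q : ℝ) - 1) < q - 2 := by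
    linarith [log_lt_sub_one_of_pos (by linarith : (0 : ℝ) < q - 1) (by linarith)]
  rw [betaC, if_neg (by omega), div_lt_iff₀ (by linarith)]
  nlinarith [mul_lt_mul_of_pos_left hlog (by linarith : (0 : ℝ) < q - 1)]

lemma exists_fixedPointBeta_lt_betaC {q : ℕ} (hq : 3 ≤ q) :
    ∃ x ∈ Ioo (1 / (q : ℝ)) 1, fixedPointBeta q x < betaC q := by
  have hq' : (3 : ℝ) ≤ q := by exact_mod_cast hq
  refine ⟨(3 * q - 2) / (4 * q), ⟨?_, ?_⟩, ?_⟩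
  · rw [div_lt_div_iff₀ (by positivity) (by positivity)]; nlinarith
  · rw [div_lt_one (by positivity)]; linarith
  set L := ((q : ℝ) - 1) * (3 * q - 2) / (q + 2)
  have hratio : ((q : ℝ) - 1) * ((3 * q - 2) / (4 * q)) / (1 - (3 * q - 2) / (4 * q)) = L := by
    have : (4 * q - (3 * q - 2) : ℝ) ≠ 0 := by linarith
    field_simp; ring
  have hqX : (q : ℝ) * ((3 * q - 2) / (4 * q)) - 1 = 3 * (q - 2) / 4 := by
    field_simp; ring
  have hLsq : L ^ 2 < ((q : ℝ) - 1) ^ 3 := by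
    have key : ((q : ℝ) - 1) ^ 3 * (q + 2) ^ 2 - (((q : ℝ) - 1) * (3 * q - 2)) ^ 2
        = ((q : ℝ) - 1) ^ 2 * (q - 2) ^ 3 := by ring
    have : 0 < ((q : ℝ) - 1) ^ 2 * (q - 2) ^ 3 :=
      mul_pos (pow_pos (by linarith) 2) (pow_pos (by linarith) 3)
    rw [div_pow, div_lt_iff₀ (by positivity)]
    linarith
  have hlog : 2 * log L < 3 * log ((q : ℝ) - 1) := by
    have hL : 0 < L := div_pos (by nlinarith) (by linarith)
    have := log_lt_log (pow_pos hL 2) hLsq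
    rwa [log_pow, log_pow, Nat.cast_ofNat, Nat.cast_ofNat] at this
  rw [fixedPointBeta, hratio, hqX, betaC, if_neg (by omega),
    div_lt_div_iff₀ (by linarith) (by linarith)]
  nlinarith [mul_lt_mul_of_pos_left hlog (by nlinarith : (0 : ℝ) < (q - 1) * (q - 2))]

/-- (Proposition 3.2): for every integer `q ≥ 3`, `0 < β_s(q) < β_c(q) < q`;
moreover for `q = 2` one has `β_s(2) = β_c(2) = 1`. -/
theorem betaS_lt_betaC :
    (∀ q : ℕ, 3 ≤ q → 0 < betaS q ∧ betaS q < betaC q ∧ betaC q < (q : ℝ)) ∧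
    betaS 2 = 1 ∧ betaC 2 = 1 := by
  refine ⟨fun q hq => ⟨?_, ?_, betaC_lt_self hq⟩, betaS_two, if_pos rfl⟩
  · exact one_half_pos.trans_le (half_le_betaS (by omega))
  · obtain ⟨x, hx, hlt⟩ := exists_fixedPointBeta_lt_betaC hq
    exact (betaS_le_fixedPointBeta (by omega) hx).trans_lt hlt
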